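/- arXiv:2407.07100 — 5 statements merged into one kernel-verified Lean document; each statement's English description precedes it below -/
import Mathlib

section
/- Let η₋<η₊, Σ>0 and M∈ℝ with 2M≠Σ². Set β=2M/Σ²−1, define g(η)=β·e^{βη}/(e^{βη₊}−e^{βη₋}) for η∈[η₋,η₊], and define f'(η)=−(η₊−η)/(η₊−η₋). Then (M−Σ²/2)·∫_{η₋}^{η₊} f'(u)g(u)du + Σ²/(2(η₊−η₋)) = (Σ²/2)·β/(e^{(η₊−η₋)β}−1). -/
/-!
Since `M - Σ²/2 = Σ²β/2`, it suffices to evaluate `∫ f' g` in closed form: integrating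
`(η₊ - u) e^{βu}` exactly gives `1/(e^{(η₊-η₋)β} - 1) - 1/(β(η₊ - η₋))`, and after
multiplying by `Σ²β/2` the second term cancels `Σ²/(2(η₊ - η₋))`.
-/

open Real

lemma integral_sub_mul_exp_mul {a b β : ℝ} (hβ : β ≠ 0) :
    ∫ u in a..b, (b - u) * exp (β * u)
      = (exp (β * b) - exp (β * a)) / β ^ 2 - (b - a) * exp (β * a) / β := by
  have hderiv : ∀ u ∈ Set.uIcc a b, HasDerivAt
      (fun u => (b - u) * exp (β * u) / β + exp (β * u) / β ^ 2) ((b - u) * exp (β * u)) u := by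
    intro u _
    have hexp : HasDerivAt (fun u => exp (β * u)) (exp (β * u) * β) u := by
      simpa using ((hasDerivAt_id u).const_mul β).exp
    have hlin : HasDerivAt (fun u => b - u) (-1) u := (hasDerivAt_id u).const_sub b
    refine ((hlin.mul hexp).div_const β |>.add (hexp.div_const (β ^ 2))).congr_deriv ?_
    field_simp
    ring
  rw [intervalIntegral.integral_eq_sub_of_hasDerivAt hderiv
    (Continuous.intervalIntegrable (by fun_prop) a b)]
  field_simp
  ring

lemma exp_mul_div_exp_sub_exp (a b β : ℝ) :
    exp (β * a) / (exp (β * b) - exp (β * a)) = 1 / (exp ((b - a) * β) - 1) := by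
  have hsplit : exp (β * b) = exp ((b - a) * β) * exp (β * a) := by
    rw [← exp_add]; ring_nf
  rw [hsplit, ← sub_one_mul, div_mul_cancel_right₀ (exp_pos _).ne', one_div]

lemma integral_linear_mul_exp_density {a b β : ℝ} (hab : a ≠ b) (hβ : β ≠ 0) :
    ∫ u in a..b, -(b - u) / (b - a) * (β * exp (β * u) / (exp (β * b) - exp (β * a)))
      = 1 / (exp ((b - a) * β) - 1) - 1 / (β * (b - a)) := by
  have hba : b - a ≠ 0 := sub_ne_zero.mpr hab.symm
  have hE : exp (β * b) - exp (β * a) ≠ 0 := by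
    refine sub_ne_zero.mpr fun heq => hab ?_
    simpa [hβ] using (exp_injective heq).symm
  have hintegrand : (fun u => -(b - u) / (b - a) * (β * exp (β * u) / (exp (β * b) - exp (β * a))))
      = fun u => -(β / ((b - a) * (exp (β * b) - exp (β * a)))) * ((b - u) * exp (β * u)) := by
    funext u
    field_simp
  rw [hintegrand, intervalIntegral.integral_const_mul, integral_sub_mul_exp_mul hβ,
    ← exp_mul_div_exp_sub_exp]
  field_simp
  ring

/-- The ergodic-theorem computation of the long-run growth rate of the lower local
time of a reflected Brownian motion with drift `M - Σ²/2` and volatility `Σ` on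
`[η₋, η₊]`, with stationary density `g` and test-function derivative `f'`. -/
theorem stmt3
    (ηminus ηplus Sig M : ℝ) (h : ηminus < ηplus) (hS : 0 < Sig)
    (hM : 2 * M ≠ Sig ^ 2)
    (β : ℝ) (hβ : β = 2 * M / Sig ^ 2 - 1)
    (g f' : ℝ → ℝ)
    (hg : ∀ η, g η = β * Real.exp (β * η) /
      (Real.exp (β * ηplus) - Real.exp (β * ηminus)))
    (hf' : ∀ η, f' η = -(ηplus - η) / (ηplus - ηminus)) :
    (M - Sig ^ 2 / 2) * (∫ u in ηminus..ηplus, f' u * g u) +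
        Sig ^ 2 / (2 * (ηplus - ηminus))
      = Sig ^ 2 / 2 * β / (Real.exp ((ηplus - ηminus) * β) - 1) := by
  have hS2 : Sig ^ 2 ≠ 0 := pow_ne_zero 2 hS.ne'
  have hdrift : M - Sig ^ 2 / 2 = Sig ^ 2 / 2 * β := by
    rw [hβ]; field_simp
  have hβ0 : β ≠ 0 := by
    rintro rfl
    exact hM (by field_simp at hβ; linarith)
  simp_rw [hf', hg]
  rw [integral_linear_mul_exp_density h.ne hβ0, hdrift]
  have hba : ηplus - ηminus ≠ 0 := sub_ne_zero.mpr h.ne'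
  field_simp
  ring
end

section
/- Let η₋<η⋆<η₊, Σ>0 and M∈ℝ with α:=2M/Σ²−1≠0. Define b₁=(e^{αη⋆}−e^{αη₊})/D and b₂=(e^{αη⋆}−e^{αη₋})/D, where D=(η₋−η⋆)e^{α(η₋+η⋆)}+(η₊−η₋)e^{α(η₊+η₋)}+(η⋆−η₊)e^{α(η⋆+η₊)}, and a₁=−b₁e^{αη₋}, a₂=−b₂e^{αη₊}. Define φ(η)=a₁+b₁e^{αη} for η₋≤η≤η⋆ and φ(η)=a₂+b₂e^{αη} for η⋆≤η≤η₊ (assuming D≠0). Then: (i) φ(η₋)=0 and φ(η₊)=0; (ii) the two branches agree at η⋆, i.e. a₁+b₁e^{αη⋆}=a₂+b₂e^{αη⋆}; (iii) (Σ²/2)φ''(η)−(M−Σ²/2)φ'(η)=0 on each of the open intervals (η₋,η⋆) and (η⋆,η₊); and (iv) ∫_{η₋}^{η₊} φ(η)dη=1. -/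
/-!
Each branch `c + d e^{αη}` solves the adjoint equation because `α` is chosen so that
`(Σ²/2) α = M - Σ²/2`. The coefficients `a₁, a₂` make the branches vanish at `η₋` and `η₊`,
and once `D` is cleared, continuity at `η⋆` and unit mass are polynomial identities in the
exponentials `e^{αη₋}, e^{αη⋆}, e^{αη₊}`.
-/

open Real Set

lemma hasDerivAt_const_add_mul_exp (c d α x : ℝ) :
    HasDerivAt (fun y => c + d * exp (α * y)) (d * α * exp (α * x)) x := by
  have h := ((hasDerivAt_id x).const_mul α).exp
  simpa [mul_comm, mul_assoc, mul_left_comm] using (h.const_mul d).const_add c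

lemma deriv_const_add_mul_exp (c d α : ℝ) :
    deriv (fun y => c + d * exp (α * y)) = fun x => d * α * exp (α * x) :=
  funext fun x => (hasDerivAt_const_add_mul_exp c d α x).deriv

lemma deriv_deriv_const_add_mul_exp (c d α : ℝ) :
    deriv (deriv (fun y => c + d * exp (α * y))) = fun x => d * α * α * exp (α * x) := by
  rw [deriv_const_add_mul_exp]
  simpa only [zero_add] using deriv_const_add_mul_exp 0 (d * α) α

lemma integral_const_add_mul_exp {α : ℝ} (hα : α ≠ 0) (c d a b : ℝ) :
    ∫ x in a..b, (c + d * exp (α * x)) =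
      c * (b - a) + d / α * (exp (α * b) - exp (α * a)) := by
  have hF (x : ℝ) :
      HasDerivAt (fun y => c * y + d / α * exp (α * y)) (c + d * exp (α * x)) x := by
    have h := ((hasDerivAt_id' x).const_mul c).add (hasDerivAt_const_add_mul_exp 0 (d / α) α x)
    simp only [zero_add, mul_one] at h
    rwa [div_mul_cancel₀ d hα] at h
  rw [intervalIntegral.integral_eq_sub_of_hasDerivAt (fun x _ => hF x)
    ((by fun_prop : Continuous fun x => c + d * exp (α * x)).intervalIntegrable a b)]
  ring

lemma adjoint_eq_zero_of_eqOn {Sig M α c d : ℝ} {φ : ℝ → ℝ} {U : Set ℝ} (hS : Sig ≠ 0)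
    (hα : α = 2 * M / Sig ^ 2 - 1) (hU : IsOpen U)
    (hφ : EqOn φ (fun y => c + d * exp (α * y)) U) {x : ℝ} (hx : x ∈ U) :
    Sig ^ 2 / 2 * deriv (deriv φ) x - (M - Sig ^ 2 / 2) * deriv φ x = 0 := by
  have hdrift : Sig ^ 2 / 2 * α = M - Sig ^ 2 / 2 := by
    rw [hα]; field_simp
  rw [(hφ.deriv hU).deriv hU hx, hφ.deriv hU hx, deriv_deriv_const_add_mul_exp,
    deriv_const_add_mul_exp]
  linear_combination d * α * exp (α * x) * hdrift

lemma intervalIntegral_eq_add_of_eqOn_Icc {f g φ : ℝ → ℝ} {a s b : ℝ}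
    (has : a ≤ s) (hsb : s ≤ b) (hf : Continuous f) (hg : Continuous g)
    (hφf : EqOn φ f (Icc a s)) (hφg : EqOn φ g (Icc s b)) :
    ∫ x in a..b, φ x = (∫ x in a..s, f x) + ∫ x in s..b, g x := by
  rw [← uIcc_of_le has] at hφf
  rw [← uIcc_of_le hsb] at hφg
  rw [← intervalIntegral.integral_add_adjacent_intervals
      (hf.continuousOn.congr hφf).intervalIntegrable
      (hg.continuousOn.congr hφg).intervalIntegrable,
    intervalIntegral.integral_congr hφf, intervalIntegral.integral_congr hφg]

/-- The stationary density of the resetted Brownian motion with drift `M - Σ²/2`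
and volatility `Σ` on `[η₋, η₊]`, resetted to `η⋆`: it vanishes at the boundaries,
is continuous at `η⋆`, solves the adjoint equation on each open subinterval, and
has total mass one. -/
theorem stmt4
    (ηminus ηstar ηplus Sig M : ℝ)
    (h1 : ηminus < ηstar) (h2 : ηstar < ηplus) (hS : 0 < Sig)
    (α : ℝ) (hα : α = 2 * M / Sig ^ 2 - 1) (hα0 : α ≠ 0)
    (D a₁ a₂ b₁ b₂ : ℝ)
    (hD : D = (ηminus - ηstar) * Real.exp (α * (ηminus + ηstar)) +
      (ηplus - ηminus) * Real.exp (α * (ηplus + ηminus)) +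
      (ηstar - ηplus) * Real.exp (α * (ηstar + ηplus)))
    (hD0 : D ≠ 0)
    (hb₁ : b₁ = (Real.exp (α * ηstar) - Real.exp (α * ηplus)) / D)
    (hb₂ : b₂ = (Real.exp (α * ηstar) - Real.exp (α * ηminus)) / D)
    (ha₁ : a₁ = -b₁ * Real.exp (α * ηminus))
    (ha₂ : a₂ = -b₂ * Real.exp (α * ηplus))
    (φ : ℝ → ℝ)
    (hφ : ∀ η, φ η = if η ≤ ηstar then a₁ + b₁ * Real.exp (α * η)
      else a₂ + b₂ * Real.exp (α * η)) :
    φ ηminus = 0 ∧ φ ηplus = 0 ∧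
    a₁ + b₁ * Real.exp (α * ηstar) = a₂ + b₂ * Real.exp (α * ηstar) ∧
    (∀ η ∈ Set.Ioo ηminus ηstar,
      Sig ^ 2 / 2 * deriv (deriv φ) η - (M - Sig ^ 2 / 2) * deriv φ η = 0) ∧
    (∀ η ∈ Set.Ioo ηstar ηplus,
      Sig ^ 2 / 2 * deriv (deriv φ) η - (M - Sig ^ 2 / 2) * deriv φ η = 0) ∧
    (∫ η in ηminus..ηplus, φ η) = 1 := by
  have hjoin : a₁ + b₁ * exp (α * ηstar) = a₂ + b₂ * exp (α * ηstar) := by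
    rw [ha₁, ha₂, hb₁, hb₂]
    field_simp
    ring
  have hleft : EqOn φ (fun y => a₁ + b₁ * exp (α * y)) (Iic ηstar) := fun y hy => by
    rw [hφ, if_pos (mem_Iic.mp hy)]
  have hright : EqOn φ (fun y => a₂ + b₂ * exp (α * y)) (Ici ηstar) := fun y hy => by
    rcases (mem_Ici.mp hy).eq_or_lt with rfl | hy
    · rw [hφ, if_pos le_rfl, hjoin]
    · rw [hφ, if_neg (not_le.mpr hy)]
  refine ⟨?_, ?_, hjoin, fun η hη => ?_, fun η hη => ?_, ?_⟩
  · rw [hleft h1.le, ha₁]; ring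
  · rw [hright h2.le, ha₂]; ring
  · exact adjoint_eq_zero_of_eqOn hS.ne' hα isOpen_Iio (hleft.mono Iio_subset_Iic_self) hη.2
  · exact adjoint_eq_zero_of_eqOn hS.ne' hα isOpen_Ioi (hright.mono Ioi_subset_Ici_self) hη.1
  · rw [intervalIntegral_eq_add_of_eqOn_Icc h1.le h2.le (by fun_prop) (by fun_prop)
      (hleft.mono Icc_subset_Iic_self) (hright.mono Icc_subset_Ici_self),
      integral_const_add_mul_exp hα0, integral_const_add_mul_exp hα0, ha₁, ha₂, hb₁, hb₂]
    field_simp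
    rw [hD]
    simp only [mul_add, exp_add]
    ring
end

section
/- Let L>0, Σ>0, and let f:[−L,L]→ℝ be continuous. Define w(η)=(2/Σ²)·( ((η+L)/(2L))·∫_{−L}^{L}(L−ξ)f(ξ)dξ − ∫_{−L}^{η}(η−ξ)f(ξ)dξ ), and define the triangular density φ(η)=(η+L)/L² for −L≤η≤0 and φ(η)=(L−η)/L² for 0≤η≤L. Then w(0)=(L²/Σ²)·∫_{−L}^{L} f(ξ)φ(ξ)dξ. -/
/-!
On `[-L, L]` the triangular density is `φ ξ = (L - |ξ|) / L²`, and
`(L - |ξ|) - (L - ξ) = ξ - |ξ|` vanishes on `[0, L]` and equals `2ξ` on `[-L, 0]`. Hence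
`∫ (L - |ξ|) f = ∫ (L - ξ) f - 2 ∫_{-L}^0 (0 - ξ) f`, which is `Σ² · w 0`.
-/

open intervalIntegral

lemma ite_triangle_eq_sub_abs (L η : ℝ) :
    (if η ≤ 0 then (η + L) / L ^ 2 else (L - η) / L ^ 2) = (L - |η|) / L ^ 2 := by
  split_ifs with h
  · rw [abs_of_nonpos h]; ring
  · rw [abs_of_pos (not_le.mp h)]

lemma integral_sub_abs_mul {f : ℝ → ℝ} {a b : ℝ} (ha : a ≤ 0) (hb : 0 ≤ b)
    (hf : IntervalIntegrable f MeasureTheory.volume a b) :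
    ∫ x in a..b, (x - |x|) * f x = 2 * ∫ x in a..0, x * f x := by
  have hcont : Continuous fun x : ℝ => x - |x| := by fun_prop
  have hf₁ : IntervalIntegrable f MeasureTheory.volume a 0 :=
    hf.mono_set (Set.uIcc_subset_uIcc_left (by simp [Set.uIcc_of_le (ha.trans hb), ha, hb]))
  have hf₂ : IntervalIntegrable f MeasureTheory.volume 0 b :=
    hf.mono_set (Set.uIcc_subset_uIcc_right (by simp [Set.uIcc_of_le (ha.trans hb), ha, hb]))
  have on_neg : ∫ x in a..0, (x - |x|) * f x = ∫ x in a..0, 2 * (x * f x) := by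
    refine integral_congr fun x hx => ?_
    rw [Set.uIcc_of_le ha] at hx
    simp only [abs_of_nonpos hx.2]
    ring
  have on_pos : ∫ x in (0 : ℝ)..b, (x - |x|) * f x = 0 := by
    refine (integral_congr (g := fun _ => 0) fun x hx => ?_).trans integral_zero
    rw [Set.uIcc_of_le hb] at hx
    simp [abs_of_nonneg hx.1]
  rw [← integral_add_adjacent_intervals (hf₁.continuousOn_mul hcont.continuousOn)
      (hf₂.continuousOn_mul hcont.continuousOn), on_neg, on_pos,
    integral_const_mul, add_zero]

lemma integral_sub_abs_mul_eq {f : ℝ → ℝ} {a b : ℝ} (ha : a ≤ 0) (hb : 0 ≤ b)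
    (hf : IntervalIntegrable f MeasureTheory.volume a b) (c : ℝ) :
    ∫ x in a..b, (c - |x|) * f x =
      (∫ x in a..b, (c - x) * f x) - 2 * ∫ x in a..0, (0 - x) * f x := by
  have hdiff := integral_sub
    (hf.continuousOn_mul (by fun_prop : Continuous fun x : ℝ => c - |x|).continuousOn)
    (hf.continuousOn_mul (by fun_prop : Continuous fun x : ℝ => c - x).continuousOn)
  simp only [← sub_mul, sub_sub_sub_cancel_left] at hdiff
  rw [integral_sub_abs_mul ha hb hf] at hdiff
  simp only [zero_sub, neg_mul, integral_neg]
  linarith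

theorem stmt5_general
    (L Sig : ℝ) (hL : 0 < L)
    (f φ w : ℝ → ℝ)
    (hf : ContinuousOn f (Set.Icc (-L) L))
    (hφ : ∀ η, φ η = if η ≤ 0 then (η + L) / L ^ 2 else (L - η) / L ^ 2)
    (hw : ∀ η, w η = (2 / Sig ^ 2) *
      (((η + L) / (2 * L)) * (∫ ξ in (-L)..L, (L - ξ) * f ξ) -
        ∫ ξ in (-L)..η, (η - ξ) * f ξ)) :
    w 0 = (L ^ 2 / Sig ^ 2) * ∫ ξ in (-L)..L, f ξ * φ ξ := by
  have hfi : IntervalIntegrable f MeasureTheory.volume (-L) L :=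
    (hf.mono (Set.uIcc_subset_Icc (by simp [hL.le]) (by simp [hL.le]))).intervalIntegrable
  have hφ_int : ∫ ξ in (-L)..L, f ξ * φ ξ = (∫ ξ in (-L)..L, (L - |ξ|) * f ξ) / L ^ 2 := by
    simp only [hφ, ite_triangle_eq_sub_abs, mul_comm (f _), div_mul_eq_mul_div, integral_div]
  rw [hw 0, hφ_int, integral_sub_abs_mul_eq (by linarith) hL.le hfi]
  generalize ∫ ξ in (-L)..L, (L - ξ) * f ξ = I
  generalize ∫ ξ in (-L)..0, (0 - ξ) * f ξ = J
  field_simp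
  ring

/-- The expected accumulated reward until exit, started at 0, equals the mean exit
time `L²/Σ²` times the stationary (triangular-density) average of `f`. -/
theorem stmt5
    (L Sig : ℝ) (hL : 0 < L) (hS : 0 < Sig)
    (f φ w : ℝ → ℝ)
    (hf : ContinuousOn f (Set.Icc (-L) L))
    (hφ : ∀ η, φ η = if η ≤ 0 then (η + L) / L ^ 2 else (L - η) / L ^ 2)
    (hw : ∀ η, w η = (2 / Sig ^ 2) *
      (((η + L) / (2 * L)) * (∫ ξ in (-L)..L, (L - ξ) * f ξ) -
        ∫ ξ in (-L)..η, (η - ξ) * f ξ)) :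
    w 0 = (L ^ 2 / Sig ^ 2) * ∫ ξ in (-L)..L, f ξ * φ ξ :=
  stmt5_general L Sig hL f φ w hf hφ hw
end

section
/- Let μ>0, σ>0, set α=μ/σ², and let κ∈(0,1) be the unique solution of (3/2)κ+log(1−κ)=0 in (0,1). Define A₊=κ^{−1/2}(σ²/μ)^{1/2} and A₋=A₊/(1−κ). Then (A₋,A₊) solves the system 2α(log(A₋/A₊)−(A₋−A₊)/A₋)−1/A₊²=0 and α(1/A₊−1/A₋)−1/A₊³=0. -/
/-- With `κ` the unique zero of `(3/2)ξ + log(1-ξ)` in `(0,1)`, the pair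
`A₊ = κ^{-1/2}(σ²/μ)^{1/2}`, `A₋ = A₊/(1-κ)` solves the leading-order system of the
risk-neutral free boundary problem. -/
theorem stmt15
    (μ σ κ : ℝ) (hμ : 0 < μ) (hσ : 0 < σ)
    (hκ : κ ∈ Set.Ioo (0:ℝ) 1) (hκeq : 3 / 2 * κ + Real.log (1 - κ) = 0)
    (α Aplus Aminus : ℝ) (hα : α = μ / σ ^ 2)
    (hAp : Aplus = κ ^ (-(1:ℝ) / 2) * (σ ^ 2 / μ) ^ ((1:ℝ) / 2))
    (hAm : Aminus = Aplus / (1 - κ)) :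
    2 * α * (Real.log (Aminus / Aplus) - (Aminus - Aplus) / Aminus)
        - 1 / Aplus ^ 2 = 0 ∧
    α * (1 / Aplus - 1 / Aminus) - 1 / Aplus ^ 3 = 0 := by
  obtain ⟨hκ0, hκ1⟩ := hκ
  have h1κ : (0:ℝ) < 1 - κ := by linarith
  have hr : (0:ℝ) < σ ^ 2 / μ := by positivity
  have hAp0 : 0 < Aplus := by
    rw [hAp]; positivity
  have hAm0 : 0 < Aminus := by rw [hAm]; positivity
  -- A₊² = κ⁻¹ * (σ²/μ)
  have hA2 : Aplus ^ 2 = κ⁻¹ * (σ ^ 2 / μ) := by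
    rw [hAp, mul_pow, ← Real.rpow_natCast (κ ^ (-(1:ℝ)/2)) 2,
      ← Real.rpow_natCast ((σ ^ 2 / μ) ^ ((1:ℝ)/2)) 2,
      ← Real.rpow_mul hκ0.le, ← Real.rpow_mul hr.le]
    norm_num
    exact Or.inl (Real.rpow_neg_one κ)
  -- 1/A₊² = κ * α
  have hinv2 : 1 / Aplus ^ 2 = κ * α := by
    rw [hA2, hα]
    field_simp
  -- log term
  have hlog : Real.log (Aminus / Aplus) = 3 / 2 * κ := by
    have h : Aminus / Aplus = (1 - κ)⁻¹ := by
      rw [hAm]; field_simp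
    rw [h, Real.log_inv]; linarith
  have hfrac : (Aminus - Aplus) / Aminus = κ := by
    rw [hAm]
    field_simp
    ring
  constructor
  · rw [hlog, hfrac, hinv2]; ring
  · have h3 : 1 / Aplus ^ 3 = κ * α / Aplus := by
      rw [pow_succ Aplus 2, ← hinv2]
      field_simp
    rw [h3, hAm]
    field_simp
    ring
end

section
/- Let γ>0, σ>0 and Λ∈ℝ with Λ(Λ−1)>0, and let π₋,π₊:(0,ε₀)→ℝ satisfy π₊(ε)=Λ+(3Λ²(Λ−1)²/(4γ))^{1/3}ε^{1/3}−(Λ/γ)(γΛ(Λ−1)/6)^{1/3}ε^{2/3}+O(ε) and π₋(ε)=Λ−(3Λ²(Λ−1)²/(4γ))^{1/3}ε^{1/3}−(Λ/γ)(γΛ(Λ−1)/6)^{1/3}ε^{2/3}+O(ε) as ε→0⁺. Define ATC(ε)=(σ²/2)·π₋(ε)π₊(ε)(π₊(ε)−1)²/((π₊(ε)−π₋(ε))(1/ε−π₊(ε))). Then as ε→0⁺, ATC(ε)=(3σ²/γ)·(γΛ(Λ−1)/6)^{4/3}·ε^{2/3}+(σ²/2)·Λ²(Λ−1)·ε+O(ε^{4/3}).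 -/
open Filter Asymptotics Topology

lemma rt_pow (x : ℝ) (hx : 0 ≤ x) (n : ℕ) :
    (x ^ ((1:ℝ)/3)) ^ n = x ^ ((n:ℝ)/3) := by
  rw [← Real.rpow_natCast (x ^ ((1:ℝ)/3)) n, ← Real.rpow_mul hx]
  congr 1; ring

lemma cube_eq_of_pos {x y : ℝ} (hx : 0 < x) (hy : 0 < y) (h : x ^ 3 = y ^ 3) :
    x = y := by nlinarith [sq_nonneg (x - y), sq_nonneg (x + y), mul_pos hx hy]

set_option maxHeartbeats 3000000 in
/-- Asymptotic expansion of the average transaction costs (negative tracking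
difference) of the leveraged-ETF control limit policy with no-trade region
`[π₋(ε), π₊(ε)]`. -/
theorem stmt17
    (γ σ Λ ε₀ : ℝ) (hγ : 0 < γ) (hσ : 0 < σ) (hΛ : 0 < Λ * (Λ - 1)) (hε₀ : 0 < ε₀)
    (πminus πplus ATC : ℝ → ℝ)
    (hplus : (fun ε => πplus ε -
        (Λ + (3 * Λ ^ 2 * (Λ - 1) ^ 2 / (4 * γ)) ^ ((1:ℝ)/3) * ε ^ ((1:ℝ)/3) -
          Λ / γ * (γ * Λ * (Λ - 1) / 6) ^ ((1:ℝ)/3) * ε ^ ((2:ℝ)/3)))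
      =O[𝓝[>] (0:ℝ)] fun ε => ε)
    (hminus : (fun ε => πminus ε -
        (Λ - (3 * Λ ^ 2 * (Λ - 1) ^ 2 / (4 * γ)) ^ ((1:ℝ)/3) * ε ^ ((1:ℝ)/3) -
          Λ / γ * (γ * Λ * (Λ - 1) / 6) ^ ((1:ℝ)/3) * ε ^ ((2:ℝ)/3)))
      =O[𝓝[>] (0:ℝ)] fun ε => ε)
    (hATC : ∀ ε, ATC ε = σ ^ 2 / 2 *
      (πminus ε * πplus ε * (πplus ε - 1) ^ 2) /
      ((πplus ε - πminus ε) * (1 / ε - πplus ε))) :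
    (fun ε => ATC ε -
        (3 * σ ^ 2 / γ * (γ * Λ * (Λ - 1) / 6) ^ ((4:ℝ)/3) * ε ^ ((2:ℝ)/3) +
          σ ^ 2 / 2 * Λ ^ 2 * (Λ - 1) * ε))
      =O[𝓝[>] (0:ℝ)] fun ε => ε ^ ((4:ℝ)/3) := by
  set l := 𝓝[>] (0:ℝ) with hl
  -- constants
  set a : ℝ := (3 * Λ ^ 2 * (Λ - 1) ^ 2 / (4 * γ)) ^ ((1:ℝ)/3) with ha_def
  set m : ℝ := (γ * Λ * (Λ - 1) / 6) ^ ((1:ℝ)/3) with hm_def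
  set b : ℝ := Λ / γ * m with hb_def
  set c2 : ℝ := 3 * σ ^ 2 / γ * (γ * Λ * (Λ - 1) / 6) ^ ((4:ℝ)/3) with hc2_def
  set c3 : ℝ := σ ^ 2 / 2 * Λ ^ 2 * (Λ - 1) with hc3_def
  have hbase_a : 0 < 3 * Λ ^ 2 * (Λ - 1) ^ 2 / (4 * γ) := by
    apply div_pos (by nlinarith) (by linarith)
  have hbase_m : 0 < γ * Λ * (Λ - 1) / 6 := by
    apply div_pos (by nlinarith) (by norm_num)
  have ha_pos : 0 < a := Real.rpow_pos_of_pos hbase_a _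
  have hm_pos : 0 < m := Real.rpow_pos_of_pos hbase_m _
  have ha3 : γ * a ^ 3 = 3 * Λ ^ 2 * (Λ - 1) ^ 2 / 4 := by
    have h3 : a ^ 3 = 3 * Λ ^ 2 * (Λ - 1) ^ 2 / (4 * γ) := by
      rw [ha_def, rt_pow _ hbase_a.le 3]; norm_num
    rw [h3]; field_simp
  have hm3 : m ^ 3 = γ * Λ * (Λ - 1) / 6 := by
    rw [hm_def, rt_pow _ hbase_m.le 3]; norm_num
  have hc2 : c2 = σ ^ 2 * γ * a ^ 2 / 3 := by
    have h4 : (γ * Λ * (Λ - 1) / 6) ^ ((4:ℝ)/3) = m ^ 4 := by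
      rw [hm_def, rt_pow _ hbase_m.le 4]; norm_num
    have h9 : 9 * m ^ 4 = γ ^ 2 * a ^ 2 := by
      have key : (9 * m ^ 4) ^ 3 = (γ ^ 2 * a ^ 2) ^ 3 := by
        have e1 : (9 * m ^ 4) ^ 3 = 729 * (m ^ 3) ^ 4 := by ring
        have e2 : (γ ^ 2 * a ^ 2) ^ 3 = γ ^ 4 * (γ * a ^ 3) ^ 2 := by ring
        rw [e1, e2, hm3, ha3]; ring
      exact cube_eq_of_pos (by positivity) (by positivity) key
    rw [hc2_def, h4]
    field_simp
    nlinarith [h9]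
  -- the cube-root variable
  set tt : ℝ → ℝ := fun ε => ε ^ ((1:ℝ)/3) with htt_def
  have hpos : ∀ᶠ ε in l, 0 < ε := self_mem_nhdsWithin
  have ht0 : Tendsto tt l (𝓝 0) := by
    have hc : ContinuousAt (fun x : ℝ => x ^ ((1:ℝ)/3)) 0 :=
      Real.continuousAt_rpow_const 0 _ (Or.inr (by norm_num))
    have h := hc.tendsto
    rw [Real.zero_rpow (by norm_num)] at h
    exact h.mono_left nhdsWithin_le_nhds
  have htpos : ∀ᶠ ε in l, 0 < tt ε := hpos.mono fun ε hε => Real.rpow_pos_of_pos hε _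
  have hcube : ∀ᶠ ε in l, tt ε ^ 3 = ε := hpos.mono fun ε hε => by
    rw [htt_def]; simp only; rw [rt_pow _ hε.le 3]; norm_num
  have h23 : ∀ᶠ ε in l, ε ^ ((2:ℝ)/3) = tt ε ^ 2 := hpos.mono fun ε hε => by
    rw [htt_def]; simp only; rw [rt_pow _ hε.le 2]; norm_num
  have h43 : ∀ᶠ ε in l, ε ^ ((4:ℝ)/3) = tt ε ^ 4 := hpos.mono fun ε hε => by
    rw [htt_def]; simp only; rw [rt_pow _ hε.le 4]; norm_num
  -- remainders
  set rp : ℝ → ℝ := fun ε => πplus ε - (Λ + a * tt ε - b * tt ε ^ 2) with hrp_def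
  set rm : ℝ → ℝ := fun ε => πminus ε - (Λ - a * tt ε - b * tt ε ^ 2) with hrm_def
  have hrpO : rp =O[l] fun ε => tt ε ^ 3 := by
    refine hplus.congr' (h23.mono fun ε h => ?_) (hcube.mono fun ε h => h.symm)
    rw [hrp_def]; simp only; rw [h]
  have hrmO : rm =O[l] fun ε => tt ε ^ 3 := by
    refine hminus.congr' (h23.mono fun ε h => ?_) (hcube.mono fun ε h => h.symm)
    rw [hrm_def]; simp only; rw [h]
  have ht3 : Tendsto (fun ε => tt ε ^ 3) l (𝓝 0) := by
    have := ht0.pow 3; simpa using this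
  have hrp0 : Tendsto rp l (𝓝 0) := hrpO.trans_tendsto ht3
  have hrm0 : Tendsto rm l (𝓝 0) := hrmO.trans_tendsto ht3
  have hPf : Tendsto (fun ε => Λ + a * tt ε - b * tt ε ^ 2) l (𝓝 (Λ + a * 0 - b * 0 ^ 2)) :=
    (tendsto_const_nhds.add (tendsto_const_nhds.mul ht0)).sub
      (tendsto_const_nhds.mul (ht0.pow 2))
  have hQf : Tendsto (fun ε => Λ - a * tt ε - b * tt ε ^ 2) l (𝓝 (Λ - a * 0 - b * 0 ^ 2)) :=
    (tendsto_const_nhds.sub (tendsto_const_nhds.mul ht0)).sub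
      (tendsto_const_nhds.mul (ht0.pow 2))
  norm_num at hPf hQf
  have hp_t : Tendsto πplus l (𝓝 Λ) := by
    have h1 := hPf.add hrp0
    norm_num at h1
    exact h1.congr fun ε => by rw [hrp_def]; simp only; ring
  have hq_t : Tendsto πminus l (𝓝 Λ) := by
    have h1 := hQf.add hrm0
    norm_num at h1
    exact h1.congr fun ε => by rw [hrm_def]; simp only; ring
  have hid0 : Tendsto (fun ε : ℝ => ε) l (𝓝 0) := tendsto_id.mono_left nhdsWithin_le_nhds
  have hεp : Tendsto (fun ε => 1 - ε * πplus ε) l (𝓝 1) := by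
    have := tendsto_const_nhds (x := (1:ℝ)) (f := l) |>.sub (hid0.mul hp_t)
    simpa using this
  -- denominator
  set Df : ℝ → ℝ := fun ε => (πplus ε - πminus ε) * (1 - ε * πplus ε) with hDf_def
  set Tg : ℝ → ℝ := fun ε => c2 * ε ^ ((2:ℝ)/3) + c3 * ε with hTg_def
  set Nf : ℝ → ℝ := fun ε =>
    σ ^ 2 / 2 * (ε * (πminus ε * πplus ε * (πplus ε - 1) ^ 2)) - Tg ε * Df ε with hNf_def
  have hdiff : (fun ε => (πplus ε - πminus ε) / tt ε)
      =ᶠ[l] fun ε => 2 * a + (rp ε - rm ε) / tt ε := by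
    filter_upwards [htpos] with ε ht
    rw [hrp_def, hrm_def]; simp only
    field_simp
    ring
  have hrpmO : (fun ε => (rp ε - rm ε) / tt ε) =O[l] fun ε => tt ε ^ 3 * (tt ε)⁻¹ :=
    ((hrpO.sub hrmO).mul (isBigO_refl (fun ε => (tt ε)⁻¹) l)).congr'
      (Eventually.of_forall fun ε => (div_eq_mul_inv _ _).symm) EventuallyEq.rfl
  have hrpm0 : Tendsto (fun ε => (rp ε - rm ε) / tt ε) l (𝓝 0) := by
    refine hrpmO.trans_tendsto ?_
    have h2 : Tendsto (fun ε => tt ε ^ 2) l (𝓝 0) := by simpa using ht0.pow 2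
    refine Filter.Tendsto.congr' ?_ h2
    filter_upwards [htpos] with ε ht
    field_simp
  have hDt : Tendsto (fun ε => Df ε / tt ε) l (𝓝 (2 * a)) := by
    have hsum : Tendsto (fun ε => 2 * a + (rp ε - rm ε) / tt ε) l (𝓝 (2 * a)) := by
      simpa using (tendsto_const_nhds (x := 2 * a) (f := l)).add hrpm0
    have hfrac := Filter.Tendsto.congr' hdiff.symm hsum
    have h1 := hfrac.mul hεp
    norm_num at h1
    exact h1.congr fun ε => by rw [hDf_def]; simp only; ring
  have h2a : (2 * a) ≠ 0 := by positivity
  have htD : Tendsto (fun ε => tt ε / Df ε) l (𝓝 (2 * a)⁻¹) :=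
    (hDt.inv₀ h2a).congr fun ε => by rw [inv_div]
  have htD_O : (fun ε => tt ε / Df ε) =O[l] (fun _ => (1:ℝ)) := htD.isBigO_one ℝ
  have hD_ne : ∀ᶠ ε in l, Df ε ≠ 0 := by
    filter_upwards [hDt.eventually_ne h2a] with ε h1
    intro h0
    exact h1 (by rw [h0]; simp)
  have hEq : (fun ε => ATC ε - (c2 * ε ^ ((2:ℝ)/3) + c3 * ε)) =ᶠ[l]
      fun ε => Nf ε / Df ε := by
    filter_upwards [hpos, hD_ne] with ε hε hD
    simp only [hNf_def, hDf_def, hTg_def] at hD ⊢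
    have hε' : ε ≠ 0 := hε.ne'
    rw [hATC ε]
    set T := c2 * ε ^ ((2:ℝ)/3) + c3 * ε with hT
    set M := πminus ε * πplus ε * (πplus ε - 1) ^ 2 with hM
    set D' := (πplus ε - πminus ε) * (1 - ε * πplus ε) with hD'
    have h3 : 1 / ε - πplus ε = (1 - ε * πplus ε) / ε := by field_simp
    rw [h3]
    have e1 : (πplus ε - πminus ε) * ((1 - ε * πplus ε) / ε) = D' / ε := by
      rw [hD']; ring
    rw [e1]
    rw [div_div_eq_mul_div, sub_div, mul_div_cancel_right₀ _ hD]
    ring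
  -- explicit polynomial factor
  set G : ℝ → ℝ := fun u =>
    σ ^ 2 * (b * Λ * (-1 + 3 * Λ - 2 * Λ ^ 2) + a ^ 2 * (Λ - 1 / 2)
      + u * (3 / 4 * Λ ^ 2 / γ - 9 / 4 * Λ ^ 3 / γ + 9 / 4 * Λ ^ 4 / γ - 3 / 4 * Λ ^ 5 / γ
          + 1 / 2 * Λ ^ 3 - Λ ^ 4 + 1 / 2 * Λ ^ 5 + 2 * a * b * Λ - 3 * a * b * Λ ^ 2)
      + u ^ 2 * (1 / 2 * b ^ 2 - 3 * b ^ 2 * Λ + 3 * b ^ 2 * Λ ^ 2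
          - 3 / 8 * a * Λ ^ 2 / γ + 1 / 2 * a * Λ ^ 2 + 3 / 4 * a * Λ ^ 3 / γ - 2 * a * Λ ^ 3
          - 3 / 8 * a * Λ ^ 4 / γ + 3 / 2 * a * Λ ^ 4 - a ^ 2 * b)
      + u ^ 3 * (3 / 4 * b * Λ ^ 2 / γ - 1 / 2 * b * Λ ^ 2 - 3 / 2 * b * Λ ^ 3 / γ + b * Λ ^ 3
          + 3 / 4 * b * Λ ^ 4 / γ - 1 / 2 * b * Λ ^ 4 - a * b ^ 2 + 3 * a * b ^ 2 * Λ
          - a ^ 2 * Λ ^ 2 + a ^ 2 * Λ ^ 3)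
      + u ^ 4 * (b ^ 3 - 2 * b ^ 3 * Λ + a * b * Λ ^ 2 - a * b * Λ ^ 3)
      + u ^ 5 * (-(a * b ^ 3)) + u ^ 6 * (1 / 2 * b ^ 4)) with hG_def
  set Rem : ℝ → ℝ := fun ε =>
    σ ^ 2 / 2 * tt ε ^ 3 *
        (rm ε * (πplus ε * (πplus ε - 1) ^ 2)
          + (Λ - a * tt ε - b * tt ε ^ 2) * rp ε *
            (πplus ε ^ 2 + πplus ε * (Λ + a * tt ε - b * tt ε ^ 2)
              + (Λ + a * tt ε - b * tt ε ^ 2) ^ 2 - 2 * πplus ε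
              - 2 * (Λ + a * tt ε - b * tt ε ^ 2) + 1))
      - Tg ε * ((rp ε - rm ε) * (1 - ε * πplus ε)
          - 2 * a * tt ε * (tt ε ^ 3 * rp ε)) with hRem_def
  have hG' : ∀ u : ℝ, γ * G u = (-1) * b * Λ * σ ^ 2 * γ + (3) * b * Λ ^ 2 * σ ^ 2 * γ + (-2) * b * Λ ^ 3 * σ ^ 2 * γ + (-1/2) * a ^ 2 * σ ^ 2 * γ + (1) * a ^ 2 * Λ * σ ^ 2 * γ + (3/4) * u * Λ ^ 2 * σ ^ 2 + (-9/4) * u * Λ ^ 3 * σ ^ 2 + (1/2) * u * Λ ^ 3 * σ ^ 2 * γ + (9/4) * u * Λ ^ 4 * σ ^ 2 + (-1) * u * Λ ^ 4 * σ ^ 2 * γ + (-3/4) * u * Λ ^ 5 * σ ^ 2 + (1/2) * u * Λ ^ 5 * σ ^ 2 * γ + (2) * u * a * b * Λ * σ ^ 2 * γ + (-3) * u * a * b * Λ ^ 2 * σ ^ 2 * γ + (1/2) * u ^ 2 * b ^ 2 * σ ^ 2 * γ + (-3) * u ^ 2 * b ^ 2 * Λ * σ ^ 2 * γ + (3) *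 u ^ 2 * b ^ 2 * Λ ^ 2 * σ ^ 2 * γ + (-3/8) * u ^ 2 * a * Λ ^ 2 * σ ^ 2 + (1/2) * u ^ 2 * a * Λ ^ 2 * σ ^ 2 * γ + (3/4) * u ^ 2 * a * Λ ^ 3 * σ ^ 2 + (-2) * u ^ 2 * a * Λ ^ 3 * σ ^ 2 * γ + (-3/8) * u ^ 2 * a * Λ ^ 4 * σ ^ 2 + (3/2) * u ^ 2 * a * Λ ^ 4 * σ ^ 2 * γ + (-1) * u ^ 2 * a ^ 2 * b * σ ^ 2 * γ + (3/4) * u ^ 3 * b * Λ ^ 2 * σ ^ 2 + (-1/2) * u ^ 3 * b * Λ ^ 2 * σ ^ 2 * γ + (-3/2) * u ^ 3 * b * Λ ^ 3 * σ ^ 2 + (1) * u ^ 3 * b * Λ ^ 3 * σ ^ 2 * γ + (3/4) * u ^ 3 * b * Λ ^ 4 * σ ^ 2 + (-1/2) * u ^ 3 * b * Λ ^ 4 * σ ^ 2 * γ + (-1) * u ^ 3 * a * b ^ 2 * σ ^ 2 * γ + (3) * u ^ 3 * a * b ^ 2 * Λ * σ ^ 2 * γ + (-1) * u ^ 3 *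 a ^ 2 * Λ ^ 2 * σ ^ 2 * γ + (1) * u ^ 3 * a ^ 2 * Λ ^ 3 * σ ^ 2 * γ + (1) * u ^ 4 * b ^ 3 * σ ^ 2 * γ + (-2) * u ^ 4 * b ^ 3 * Λ * σ ^ 2 * γ + (1) * u ^ 4 * a * b * Λ ^ 2 * σ ^ 2 * γ + (-1) * u ^ 4 * a * b * Λ ^ 3 * σ ^ 2 * γ + (-1) * u ^ 5 * a * b ^ 3 * σ ^ 2 * γ + (1/2) * u ^ 6 * b ^ 4 * σ ^ 2 * γ := by
    intro u
    rw [hG_def]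
    field_simp
    ring
  have hNsplit : Nf =ᶠ[l] fun ε => tt ε ^ 5 * G (tt ε) + Rem ε := by
    filter_upwards [hpos, hcube, h23] with ε hε hc h2
    clear_value G
    simp only [hNf_def, hTg_def, hDf_def, hRem_def]
    rw [h2, hc2, hc3_def]
    have hpu : πplus ε = Λ + a * tt ε - b * tt ε ^ 2 + rp ε := by
      simp only [hrp_def]; ring
    have hqu : πminus ε = Λ - a * tt ε - b * tt ε ^ 2 + rm ε := by
      simp only [hrm_def]; ring
    rw [hpu, hqu]
    generalize rp ε = Rp
    generalize rm ε = Rm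
    obtain ⟨u, hu⟩ : ∃ u, tt ε = u := ⟨_, rfl⟩
    rw [hu] at hc ⊢
    subst hc
    refine mul_left_cancel₀ hγ.ne' ?_
    linear_combination ((-2/3) * u ^ 3 * σ ^ 2 * γ + (1) * u ^ 6 * σ ^ 2 + (-1) * u ^ 6 * Λ * σ ^ 2 + (2/3) * u ^ 6 * Λ * σ ^ 2 * γ + (-1/2) * u ^ 7 * a * σ ^ 2 + (2/3) * u ^ 7 * a * σ ^ 2 * γ + (1) * u ^ 8 * b * σ ^ 2 + (-2/3) * u ^ 8 * b * σ ^ 2 * γ) * ha3 - u ^ 5 * hG' u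
  -- big-O bookkeeping
  have htO1 : tt =O[l] (fun _ => (1:ℝ)) := ht0.isBigO_one ℝ
  have ht3O : (fun ε => tt ε ^ 3) =O[l] (fun _ => (1:ℝ)) := ht3.isBigO_one ℝ
  have hGcont : Continuous G := by rw [hG_def]; fun_prop
  have hGt : Tendsto (fun ε => G (tt ε)) l (𝓝 (G 0)) := (hGcont.tendsto 0).comp ht0
  have hMain : (fun ε => tt ε ^ 5 * G (tt ε)) =O[l] fun ε => tt ε ^ 5 :=
    ((isBigO_refl (fun ε => tt ε ^ 5) l).mul (hGt.isBigO_one ℝ)).congr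
      (fun _ => rfl) (fun ε => mul_one _)
  have hTgO : Tg =O[l] fun ε => tt ε ^ 2 := by
    have h32 : (fun ε => tt ε ^ 3) =O[l] fun ε => tt ε ^ 2 :=
      ((isBigO_refl (fun ε => tt ε ^ 2) l).mul htO1).congr
        (fun ε => by ring) (fun ε => mul_one _)
    have hsum : (fun ε => c2 * tt ε ^ 2 + c3 * tt ε ^ 3) =O[l] fun ε => tt ε ^ 2 :=
      ((isBigO_refl (fun ε => tt ε ^ 2) l).const_mul_left c2).add
        (h32.const_mul_left c3)
    refine hsum.congr' ?_ EventuallyEq.rfl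
    filter_upwards [hcube, h23] with ε hc h2
    simp only [hTg_def]
    linear_combination c3 * hc - c2 * h2
  have hApO : (fun ε => πplus ε * (πplus ε - 1) ^ 2) =O[l] (fun _ => (1:ℝ)) :=
    (hp_t.mul ((hp_t.sub (tendsto_const_nhds (x := (1:ℝ)))).pow 2)).isBigO_one ℝ
  have hQfO : (fun ε => Λ - a * tt ε - b * tt ε ^ 2) =O[l] (fun _ => (1:ℝ)) :=
    hQf.isBigO_one ℝ
  have hH_t : Tendsto (fun ε => πplus ε ^ 2 + πplus ε * (Λ + a * tt ε - b * tt ε ^ 2)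
      + (Λ + a * tt ε - b * tt ε ^ 2) ^ 2 - 2 * πplus ε
      - 2 * (Λ + a * tt ε - b * tt ε ^ 2) + 1) l
      (𝓝 (Λ ^ 2 + Λ * Λ + Λ ^ 2 - 2 * Λ - 2 * Λ + 1)) :=
    (((((hp_t.pow 2).add (hp_t.mul hPf)).add (hPf.pow 2)).sub
      ((tendsto_const_nhds (x := (2:ℝ))).mul hp_t)).sub
      ((tendsto_const_nhds (x := (2:ℝ))).mul hPf)).add (tendsto_const_nhds (x := (1:ℝ)))
  have hHO := hH_t.isBigO_one ℝ
  -- first part of Rem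
  have hX : (fun ε => rm ε * (πplus ε * (πplus ε - 1) ^ 2)
      + (Λ - a * tt ε - b * tt ε ^ 2) * rp ε *
        (πplus ε ^ 2 + πplus ε * (Λ + a * tt ε - b * tt ε ^ 2)
          + (Λ + a * tt ε - b * tt ε ^ 2) ^ 2 - 2 * πplus ε
          - 2 * (Λ + a * tt ε - b * tt ε ^ 2) + 1)) =O[l] fun ε => tt ε ^ 3 := by
    refine IsBigO.add ?_ ?_
    · exact (hrmO.mul hApO).congr (fun _ => rfl) (fun ε => mul_one _)
    · exact ((hQfO.mul hrpO).mul hHO).congr (fun _ => rfl) (fun ε => by ring)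
  have h6to5 : (fun ε => tt ε ^ 3 * tt ε ^ 3) =O[l] fun ε => tt ε ^ 5 :=
    ((isBigO_refl (fun ε => tt ε ^ 5) l).mul htO1).congr
      (fun ε => by ring) (fun ε => mul_one _)
  have hP1 : (fun ε => σ ^ 2 / 2 * tt ε ^ 3 *
      (rm ε * (πplus ε * (πplus ε - 1) ^ 2)
        + (Λ - a * tt ε - b * tt ε ^ 2) * rp ε *
          (πplus ε ^ 2 + πplus ε * (Λ + a * tt ε - b * tt ε ^ 2)
            + (Λ + a * tt ε - b * tt ε ^ 2) ^ 2 - 2 * πplus ε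
            - 2 * (Λ + a * tt ε - b * tt ε ^ 2) + 1))) =O[l] fun ε => tt ε ^ 5 := by
    have h1 := ((isBigO_refl (fun ε => tt ε ^ 3) l).const_mul_left (σ ^ 2 / 2)).mul hX
    exact h1.trans h6to5
  -- second part of Rem
  have hY : (fun ε => (rp ε - rm ε) * (1 - ε * πplus ε)
      - 2 * a * tt ε * (tt ε ^ 3 * rp ε)) =O[l] fun ε => tt ε ^ 3 := by
    refine IsBigO.sub ?_ ?_
    · exact ((hrpO.sub hrmO).mul (hεp.isBigO_one ℝ)).congr
        (fun _ => rfl) (fun ε => mul_one _)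
    · have h1 := (htO1.const_mul_left (2 * a)).mul
        ((isBigO_refl (fun ε => tt ε ^ 3) l).mul hrpO)
      have h2 : (fun ε => (1:ℝ) * (tt ε ^ 3 * tt ε ^ 3)) =O[l] fun ε => tt ε ^ 3 :=
        (ht3O.mul (isBigO_refl (fun ε => tt ε ^ 3) l)).congr
          (fun ε => by ring) (fun ε => one_mul _)
      exact h1.trans h2
  have hP2 : (fun ε => Tg ε * ((rp ε - rm ε) * (1 - ε * πplus ε)
      - 2 * a * tt ε * (tt ε ^ 3 * rp ε))) =O[l] fun ε => tt ε ^ 5 :=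
    (hTgO.mul hY).congr (fun _ => rfl) (fun ε => by ring)
  have hRemO : Rem =O[l] fun ε => tt ε ^ 5 := by
    rw [hRem_def]
    exact hP1.sub hP2
  have hNO : Nf =O[l] fun ε => tt ε ^ 5 :=
    (hMain.add hRemO).congr' hNsplit.symm EventuallyEq.rfl
  -- conclusion
  have hNdiv : (fun ε => Nf ε / tt ε) =O[l] fun ε => tt ε ^ 4 := by
    have h1 := hNO.mul (isBigO_refl (fun ε => (tt ε)⁻¹) l)
    refine h1.congr' (Eventually.of_forall fun ε => (div_eq_mul_inv _ _).symm) ?_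
    filter_upwards [htpos] with ε ht
    field_simp
  have hProd := hNdiv.mul htD_O
  have hfin : (fun ε => Nf ε / Df ε) =ᶠ[l]
      fun ε => Nf ε / tt ε * (tt ε / Df ε) := by
    filter_upwards [htpos] with ε ht
    rw [div_mul_div_comm, mul_comm (Nf ε) (tt ε), mul_div_mul_left _ _ ht.ne']
  refine hProd.congr' (hEq.trans hfin).symm ?_
  filter_upwards [h43] with ε h
  rw [mul_one, h]
end
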